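/- arXiv:2511.21992 — 4 statements merged into one kernel-verified Lean document; each statement's English description precedes it below -/
import Mathlib

section
/- For independent real-valued random variables X_1, ..., X_I (I ≥ 2) with finite second moments, the expectation of the usual sample-variance-of-the-mean estimator is at least the variance of the sample mean: E[(1/(I(I-1))) ∑_{i=1}^I (X_i - X̄)² ] ≥ Var(X̄), where X̄ = (1/I) ∑ X_i. -/
open MeasureTheory ProbabilityTheory

theorem stmt_0 {Ω : Type*} [MeasurableSpace Ω] (μ : Measure Ω) [IsProbabilityMeasure μ]
    (I : ℕ) (hI : 2 ≤ I) (X : Fin I → Ω → ℝ)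
    (hmeas : ∀ i, Measurable (X i))
    (hL2 : ∀ i, MemLp (X i) 2 μ)
    (hindep : iIndepFun X μ) :
    variance (fun ω => (∑ i, X i ω) / (I : ℝ)) μ ≤
      ∫ ω, (∑ i, (X i ω - (∑ j, X j ω) / (I : ℝ)) ^ 2) / ((I : ℝ) * ((I : ℝ) - 1)) ∂μ := by
  classical
  set n : ℝ := (I : ℝ) with hn
  have hn2 : (2:ℝ) ≤ n := by rw [hn]; exact_mod_cast hI
  have hn0 : n ≠ 0 := by linarith
  have hn1 : n - 1 > 0 := by linarith
  have hSmem : MemLp (fun ω => ∑ i, X i ω) 2 μ := by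
    have h := memLp_finset_sum' (μ := μ) Finset.univ (f := X) (fun i _ => hL2 i)
    have he : (∑ i, X i) = fun ω => ∑ i, X i ω := by funext ω; simp
    rwa [he] at h
  have hintX : ∀ i, Integrable (X i) μ := fun i => (hL2 i).integrable one_le_two
  have hintX2 : ∀ i, Integrable (fun ω => X i ω ^ 2) μ := fun i => (hL2 i).integrable_sq
  have hintS2 : Integrable (fun ω => (∑ i, X i ω) ^ 2) μ := hSmem.integrable_sq
  set A : Fin I → ℝ := fun i => ∫ ω, X i ω ∂μ with hA
  set V : ℝ := ∑ i, variance (X i) μ with hV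
  have hvarS : variance (fun ω => ∑ i, X i ω) μ = V := by
    have h := IndepFun.variance_sum (μ := μ) (X := X) (s := Finset.univ)
      (fun i _ => hL2 i) (fun i _ j _ hij => hindep.indepFun hij)
    rw [hV, ← h]
    congr 1
    funext ω
    simp [Finset.sum_apply]
  have hLHS : variance (fun ω => (∑ i, X i ω) / n) μ = V / n ^ 2 := by
    have heq : (fun ω => (∑ i, X i ω) / n) = (n⁻¹ • fun ω => ∑ i, X i ω) := by
      funext ω; simp [div_eq_inv_mul]
    rw [heq, variance_smul, hvarS]
    field_simp
  -- pointwise identity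
  have key : ∀ ω, (∑ i, (X i ω - (∑ j, X j ω) / n) ^ 2)
      = ∑ i, (X i ω)^2 - (∑ i, X i ω)^2 / n := by
    intro ω
    have h1 : ∑ i, (X i ω - (∑ j, X j ω)/n)^2
        = ∑ i, ((X i ω)^2 - 2*((∑ j, X j ω)/n)*X i ω + ((∑ j, X j ω)/n)^2) := by
      apply Finset.sum_congr rfl; intros; ring
    rw [h1, Finset.sum_add_distrib, Finset.sum_sub_distrib, ← Finset.mul_sum,
      Finset.sum_const, Finset.card_univ, Fintype.card_fin, nsmul_eq_mul]
    field_simp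
    ring
  -- integrals
  have hintsum : Integrable (fun ω => ∑ i, (X i ω)^2) μ :=
    integrable_finset_sum _ (fun i _ => hintX2 i)
  have hEX2 : ∀ i, ∫ ω, X i ω ^ 2 ∂μ = variance (X i) μ + A i ^ 2 := by
    intro i
    rw [variance_eq_sub (hL2 i)]
    simp only [Pi.pow_apply, hA]
    ring
  have hES : ∫ ω, (∑ i, X i ω) ∂μ = ∑ i, A i := by
    rw [integral_finset_sum _ (fun i _ => hintX i)]
  have hES2 : ∫ ω, (∑ i, X i ω) ^ 2 ∂μ = V + (∑ i, A i) ^ 2 := by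
    have := variance_eq_sub hSmem
    simp only [Pi.pow_apply] at this
    rw [this] at hvarS
    rw [hES] at hvarS
    linarith [hvarS]
  have hint_main : ∫ ω, (∑ i, (X i ω - (∑ j, X j ω) / n) ^ 2) ∂μ
      = (∑ i, (variance (X i) μ + A i ^ 2)) - (V + (∑ i, A i)^2) / n := by
    have heq : (fun ω => ∑ i, (X i ω - (∑ j, X j ω) / n) ^ 2)
        = fun ω => (∑ i, (X i ω)^2) - (∑ i, X i ω)^2 / n := by
      funext ω; exact key ω
    rw [heq, integral_sub hintsum (hintS2.div_const n), integral_div, hES2,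
      integral_finset_sum _ (fun i _ => hintX2 i)]
    congr 1
    exact Finset.sum_congr rfl (fun i _ => hEX2 i)
  -- rewrite RHS
  have hRHS : ∫ ω, (∑ i, (X i ω - (∑ j, X j ω) / n) ^ 2) / (n * (n - 1)) ∂μ
      = ((V + ∑ i, A i ^ 2) - (V + (∑ i, A i)^2) / n) / (n * (n - 1)) := by
    rw [integral_div, hint_main, Finset.sum_add_distrib]
  rw [hLHS, hRHS]
  -- Cauchy-Schwarz
  have hCS : (∑ i, A i) ^ 2 ≤ n * ∑ i, A i ^ 2 := by
    have := sq_sum_le_card_mul_sum_sq (s := (Finset.univ : Finset (Fin I))) (f := A)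
    simpa [Finset.card_univ, hn] using this
  have hVnn : 0 ≤ V := Finset.sum_nonneg fun i _ => variance_nonneg _ _
  have expand : (V + ∑ i, A i ^ 2) - (V + (∑ i, A i)^2) / n
      = ((n-1)*V + (n * ∑ i, A i ^ 2 - (∑ i, A i)^2))/n := by
    field_simp; ring
  rw [expand, div_div, div_le_div_iff₀ (by positivity) (by positivity)]
  nlinarith [mul_nonneg (show (0:ℝ) ≤ n * ∑ i, A i ^ 2 - (∑ i, A i)^2 by linarith) (sq_nonneg n)]
end

section
/- Let Γ ≥ 1, let a, η be real numbers, and let V be a random variable taking value +1 with probability Γ/(Γ+1) and -1 with probability 1/(Γ+1). Define U = a + V|η| - ((Γ-1)/(Γ+1))·|a + V|η||. Then E[U] ≤ (1 - ((Γ-1)/(Γ+1))²)·a. -/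
open MeasureTheory

theorem stmt_7 {Ω : Type*} [MeasurableSpace Ω] (μ : Measure Ω) [IsProbabilityMeasure μ]
    (Γ a η : ℝ) (hΓ : 1 ≤ Γ)
    (V : Ω → ℝ) (hV : Measurable V)
    (h1 : μ {ω | V ω = 1} = ENNReal.ofReal (Γ / (Γ + 1)))
    (h2 : μ {ω | V ω = -1} = ENNReal.ofReal (1 / (Γ + 1))) :
    (∫ ω, (a + V ω * |η| - ((Γ - 1) / (Γ + 1)) * abs (a + V ω * |η|)) ∂μ)
      ≤ (1 - ((Γ - 1) / (Γ + 1)) ^ 2) * a := by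
  have hΓ0 : (0:ℝ) < Γ + 1 := by linarith
  set κ : ℝ := (Γ - 1) / (Γ + 1) with hκdef
  set s : Set Ω := {ω | V ω = 1} with hs
  set t : Set Ω := {ω | V ω = -1} with ht
  have hms : MeasurableSet s := hV (measurableSet_singleton 1)
  have hmt : MeasurableSet t := hV (measurableSet_singleton (-1))
  have hdisj : Disjoint s t := by
    rw [Set.disjoint_left]
    intro ω h1 h2
    simp only [hs, ht, Set.mem_setOf_eq] at h1 h2
    rw [h1] at h2; norm_num at h2
  have hp0 : (0:ℝ) ≤ Γ / (Γ + 1) := by positivity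
  have hq0 : (0:ℝ) ≤ 1 / (Γ + 1) := by positivity
  have hsum : μ (s ∪ t) = 1 := by
    rw [measure_union hdisj hmt, h1, h2, ← ENNReal.ofReal_add hp0 hq0]
    rw [← add_div, div_self (ne_of_gt hΓ0)]
    simp
  have hcompl : μ (s ∪ t)ᶜ = 0 := by
    have := measure_compl (hms.union hmt) (measure_ne_top μ _)
    rw [hsum, measure_univ] at this
    simpa using this
  set c1 : ℝ := a + abs η - κ * abs (a + abs η) with hc1
  set c2 : ℝ := a - abs η - κ * abs (a - abs η) with hc2
  set g : Ω → ℝ := fun ω => s.indicator (fun _ => c1) ω + t.indicator (fun _ => c2) ω with hg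
  have hae : (fun ω => a + V ω * abs η - κ * abs (a + V ω * abs η)) =ᵐ[μ] g := by
    filter_upwards [measure_eq_zero_iff_ae_notMem.mp hcompl] with ω hω
    have hω' : ω ∈ s ∪ t := by
      by_contra h; exact hω h
    rcases hω' with h | h
    · have hv : V ω = 1 := h
      simp [hg, hv, Set.indicator_of_mem h, Set.indicator_of_notMem (Set.disjoint_left.mp hdisj h), hc1]
    · have hv : V ω = -1 := h
      simp [hg, hv, Set.indicator_of_mem h, Set.indicator_of_notMem (Set.disjoint_right.mp hdisj h), hc2]
      ring_nf
  rw [integral_congr_ae hae]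
  have hint1 : Integrable (s.indicator (fun _ => c1)) μ :=
    (integrable_const c1).indicator hms
  have hint2 : Integrable (t.indicator (fun _ => c2)) μ :=
    (integrable_const c2).indicator hmt
  have hI : ∫ ω, g ω ∂μ = c1 * (Γ / (Γ + 1)) + c2 * (1 / (Γ + 1)) := by
    rw [hg, integral_add hint1 hint2, integral_indicator_const _ hms,
      integral_indicator_const _ hmt, measureReal_def, measureReal_def, h1, h2,
      ENNReal.toReal_ofReal hp0, ENNReal.toReal_ofReal hq0]
    simp only [smul_eq_mul]; ring
  rw [hI]
  -- now pure real inequality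
  have hκ0 : 0 ≤ κ := by
    rw [hκdef]; apply div_nonneg <;> linarith
  have hA : a + abs η ≤ abs (a + abs η) := le_abs_self _
  have hB : -(a - abs η) ≤ abs (a - abs η) := neg_le_abs _
  have hpq : Γ / (Γ + 1) = (1 + κ) / 2 := by
    rw [hκdef]; field_simp; ring
  have hqq : 1 / (Γ + 1) = (1 - κ) / 2 := by
    rw [hκdef]; field_simp; ring
  have hκ1 : κ ≤ 1 := by
    rw [hκdef, div_le_one hΓ0]; linarith
  rw [hc1, hc2, hpq, hqq]
  nlinarith [mul_le_mul_of_nonneg_left hA hκ0, mul_le_mul_of_nonneg_left hB hκ0,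
    mul_nonneg hκ0 (sub_nonneg.mpr hκ1), mul_le_mul_of_nonneg_left hA (mul_nonneg hκ0 hκ0),
    mul_le_mul_of_nonneg_left hB (mul_nonneg hκ0 hκ0)]
end

section
/- Let Γ ≥ 1, let τ, η be reals, let A be Bernoulli with P(A=1)=π where π ∈ [1/(1+Γ), Γ/(1+Γ)], and define X = τ + (2A-1)η - ((Γ-1)/(Γ+1))·|τ + (2A-1)η|. Then Var(X) ≥ 16·(Γ/(Γ+1))·(1/(Γ+1))³·η². -/
open MeasureTheory ProbabilityTheory

theorem my_variance_congr {Ω : Type*} [MeasurableSpace Ω] {μ : Measure Ω} {X Y : Ω → ℝ}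
    (h : X =ᵐ[μ] Y) : variance X μ = variance Y μ := by
  unfold ProbabilityTheory.variance ProbabilityTheory.evariance
  rw [integral_congr_ae h]
  congr 1
  apply lintegral_congr_ae
  filter_upwards [h] with ω hω
  rw [hω]

theorem two_point_variance {Ω : Type*} [MeasurableSpace Ω] (μ : Measure Ω) [IsProbabilityMeasure μ]
    {S : Set Ω} (hS : MeasurableSet S) (a b π : ℝ) (hπ0 : 0 ≤ π) (hπ1 : π ≤ 1)
    (hμ : μ S = ENNReal.ofReal π) :
    variance (fun ω => S.indicator (fun _ => a - b) ω + b) μ = π * (1 - π) * (a - b)^2 := by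
  have hmem : MemLp (fun ω => S.indicator (fun _ => a - b) ω + b) 2 μ := by
    exact (memLp_indicator_const 2 hS (a - b) (Or.inr (measure_ne_top μ S))).add
      (memLp_const b)
  have hST : (μ S).toReal = π := by rw [hμ, ENNReal.toReal_ofReal hπ0]
  have hint : ∫ ω, (S.indicator (fun _ => a - b) ω + b) ∂μ = (a - b) * π + b := by
    rw [integral_add ((integrable_const _).indicator hS)
      (integrable_const b), integral_indicator_const _ hS, integral_const]
    simp [measureReal_def, hST, mul_comm]
  rw [variance_eq_sub hmem, hint]
  have hsq : (fun ω => (S.indicator (fun _ => a - b) ω + b)^2)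
      = fun ω => S.indicator (fun _ => a^2 - b^2) ω + b^2 := by
    funext ω
    by_cases h : ω ∈ S <;> simp [h] <;> ring
  have : ∫ ω, (S.indicator (fun _ => a - b) ω + b)^2 ∂μ = (a^2 - b^2) * π + b^2 := by
    rw [hsq, integral_add ((integrable_const _).indicator hS)
      (integrable_const _), integral_indicator_const _ hS, integral_const]
    simp [measureReal_def, hST, mul_comm]
  simp only [Pi.pow_apply]
  rw [this]
  ring

theorem stmt_12 {Ω : Type*} [MeasurableSpace Ω] (μ : Measure Ω) [IsProbabilityMeasure μ]
    (Γ τ η π : ℝ) (hΓ : 1 ≤ Γ)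
    (hπl : 1 / (1 + Γ) ≤ π) (hπu : π ≤ Γ / (1 + Γ))
    (A : Ω → ℝ) (hA : Measurable A)
    (h1 : μ {ω | A ω = 1} = ENNReal.ofReal π)
    (h0 : μ {ω | A ω = 0} = ENNReal.ofReal (1 - π)) :
    16 * (Γ / (Γ + 1)) * (1 / (Γ + 1)) ^ 3 * η ^ 2 ≤
      variance (fun ω =>
        τ + (2 * A ω - 1) * η - ((Γ - 1) / (Γ + 1)) * abs (τ + (2 * A ω - 1) * η)) μ := by
  have hG : (0:ℝ) < Γ + 1 := by linarith
  have hπ0 : 0 ≤ π := le_trans (by positivity : (0:ℝ) ≤ 1 / (1 + Γ)) hπl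
  have hπ1 : π ≤ 1 := by
    have : Γ / (1 + Γ) ≤ 1 := by rw [div_le_one (by linarith)]; linarith
    linarith
  set c : ℝ := (Γ - 1) / (Γ + 1) with hc
  set a : ℝ := τ + η - c * |τ + η| with ha
  set b : ℝ := τ - η - c * |τ - η| with hb
  set S : Set Ω := {ω | A ω = 1} with hS
  set T : Set Ω := {ω | A ω = 0} with hT
  have hSm : MeasurableSet S := hA (measurableSet_singleton 1)
  have hTm : MeasurableSet T := hA (measurableSet_singleton 0)
  have hdisj : Disjoint S T := by
    rw [Set.disjoint_left]
    intro ω hω1 hω0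
    have : (1:ℝ) = 0 := by rw [← hω1, hω0]
    norm_num at this
  have hunion : μ (S ∪ T) = 1 := by
    rw [measure_union hdisj hTm, h1, h0,
      ← ENNReal.ofReal_add hπ0 (by linarith)]
    norm_num
  have hcompl : μ (S ∪ T)ᶜ = 0 := by
    rw [measure_compl (hSm.union hTm) (measure_ne_top μ _), hunion, measure_univ, tsub_self]
  have hae : (fun ω =>
        τ + (2 * A ω - 1) * η - ((Γ - 1) / (Γ + 1)) * |τ + (2 * A ω - 1) * η|)
      =ᵐ[μ] (fun ω => S.indicator (fun _ => a - b) ω + b) := by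
    have hmem : ∀ᵐ ω ∂μ, ω ∈ S ∪ T := by
      rw [ae_iff]
      exact hcompl
    filter_upwards [hmem] with ω hω
    rcases hω with h | h
    · have hA1 : A ω = 1 := h
      simp only [Set.indicator_of_mem h]
      rw [hA1, ha, hb, hc]
      norm_num
    · have hA0 : A ω = 0 := h
      have hnot : ω ∉ S := by
        intro hmem'
        have : (1:ℝ) = 0 := by rw [← hmem', hA0]
        norm_num at this
      simp only [Set.indicator_of_notMem hnot]
      rw [hA0, hb, hc]
      norm_num
      rw [show τ + -η = τ - η from by ring]
  rw [my_variance_congr hae, two_point_variance μ hSm a b π hπ0 hπ1 h1]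
  -- arithmetic part
  have hc0 : 0 ≤ c := by rw [hc]; exact div_nonneg (by linarith) (by linarith)
  have hc1 : c ≤ 1 := by rw [hc, div_le_one hG]; linarith
  have hd : |(|τ + η| - |τ - η|)| ≤ 2 * |η| := by
    have := abs_abs_sub_abs_le_abs_sub (τ + η) (τ - η)
    have h2 : |τ + η - (τ - η)| = 2 * |η| := by
      rw [show τ + η - (τ - η) = 2 * η by ring, abs_mul]
      norm_num
    linarith
  have hab : a - b = 2 * η - c * (|τ + η| - |τ - η|) := by rw [ha, hb]; ring
  have key : 2 * (1 - c) * |η| ≤ |a - b| := by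
    rw [hab]
    have h3 : |2 * η| - |c * (|τ + η| - |τ - η|)| ≤ |2 * η - c * (|τ + η| - |τ - η|)| :=
      abs_sub_abs_le_abs_sub _ _
    have h4 : |2 * η| = 2 * |η| := by rw [abs_mul]; norm_num
    have h5 : |c * (|τ + η| - |τ - η|)| = c * |(|τ + η| - |τ - η|)| := by
      rw [abs_mul, abs_of_nonneg hc0]
    nlinarith [mul_le_mul_of_nonneg_left hd hc0]
  have key2 : (2 * (1 - c))^2 * η^2 ≤ (a - b)^2 := by
    have hnn : (0:ℝ) ≤ 2 * (1 - c) * |η| :=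
      mul_nonneg (by linarith) (abs_nonneg η)
    have := pow_le_pow_left₀ hnn key 2
    rw [sq_abs] at this
    calc (2 * (1 - c))^2 * η^2 = (2 * (1 - c) * |η|)^2 := by rw [← sq_abs η]; ring
      _ ≤ (a - b)^2 := this
  have hcval : (2 * (1 - c))^2 = 16 / (Γ + 1)^2 := by
    rw [hc]; field_simp; ring
  have hab2 : 16 / (Γ + 1)^2 * η^2 ≤ (a - b)^2 := by rw [← hcval]; exact key2
  have hpp : Γ / (Γ + 1)^2 ≤ π * (1 - π) := by
    have h1' : 1 ≤ π * (1 + Γ) := by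
      rw [div_le_iff₀ (by linarith)] at hπl; linarith
    have h2' : π * (1 + Γ) ≤ Γ := by
      rw [le_div_iff₀ (by linarith)] at hπu; linarith
    rw [div_le_iff₀ (by positivity)]
    nlinarith [mul_nonneg (by linarith : (0:ℝ) ≤ π * (1 + Γ) - 1)
      (by linarith : (0:ℝ) ≤ Γ - π * (1 + Γ))]
  calc 16 * (Γ / (Γ + 1)) * (1 / (Γ + 1)) ^ 3 * η ^ 2
      = (Γ / (Γ + 1)^2) * (16 / (Γ + 1)^2 * η^2) := by field_simp
    _ ≤ π * (1 - π) * ((a - b)^2) :=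
        mul_le_mul hpp hab2 (by positivity) (le_trans (by positivity) hpp)
end

section
/- Let r, d : Fin N → ℝ × ℝ be per-unit pairs under two instruments a and b, i.e., for every unit k there are numbers r_T^a(k), r_C^a(k), r_T^b(k), r_C^b(k) and d_T^a(k), d_C^a(k), d_T^b(k), d_C^b(k) ∈ {0,1}. Suppose each unit belongs to one of six classes: (ACO) d_T^a=d_T^b=1, d_C^a=d_C^b=0; (SW) d_T^a=d_C^a ∈ {0,1} and d_T^b=1, d_C^b=0; or one of four classes where d_T^a=d_C^a and d_T^b=d_C^b. Further assume r_T^g(k) - r_C^g(k) = (d_T^g(k) - d_C^g(k))·θ(k) for each g ∈ {a,b} and some per-unit effect θ(k). If the set SW of switchers is nonempty, then the ratio λ = [∑_k ((r_T^b - r_C^b) - (r_T^a - r_C^a))] / [∑_k ((d_T^b - d_C^b) - (d_T^a - d_C^a))] is well-defined and equals (1/|SW|)∑_{k ∈ SW} θ(k), the average effect among switchers. -/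
open Finset

theorem stmt_18 (N : ℕ)
    (rTa rCa rTb rCb dTa dCa dTb dCb θ : Fin N → ℝ)
    (hbin : ∀ k, (dTa k = 0 ∨ dTa k = 1) ∧ (dCa k = 0 ∨ dCa k = 1) ∧
        (dTb k = 0 ∨ dTb k = 1) ∧ (dCb k = 0 ∨ dCb k = 1))
    (hclass : ∀ k,
      (dTa k = 1 ∧ dCa k = 0 ∧ dTb k = 1 ∧ dCb k = 0) ∨
      (dTa k = dCa k ∧ dTb k = 1 ∧ dCb k = 0) ∨
      (dTa k = dCa k ∧ dTb k = dCb k))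
    (hexa : ∀ k, rTa k - rCa k = (dTa k - dCa k) * θ k)
    (hexb : ∀ k, rTb k - rCb k = (dTb k - dCb k) * θ k)
    (SW : Finset (Fin N))
    (hSW : ∀ k, k ∈ SW ↔ (dTa k = dCa k ∧ dTb k = 1 ∧ dCb k = 0))
    (hne : SW.Nonempty) :
    (∑ k, ((dTb k - dCb k) - (dTa k - dCa k))) ≠ 0 ∧
    (∑ k, ((rTb k - rCb k) - (rTa k - rCa k)))
        / (∑ k, ((dTb k - dCb k) - (dTa k - dCa k)))
      = (∑ k ∈ SW, θ k) / (SW.card : ℝ) := by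
  have hd : ∀ k, (dTb k - dCb k) - (dTa k - dCa k) = if k ∈ SW then (1:ℝ) else 0 := by
    intro k
    by_cases hk : k ∈ SW
    · obtain ⟨h1, h2, h3⟩ := (hSW k).mp hk
      simp [hk, h1, h2, h3]
    · simp only [hk, if_false]
      rcases hclass k with ⟨h1, h2, h3, h4⟩ | h | ⟨h1, h2⟩
      · rw [h1, h2, h3, h4]; ring
      · exact absurd ((hSW k).mpr h) hk
      · rw [h1, h2]; ring
  have hr : ∀ k, (rTb k - rCb k) - (rTa k - rCa k) = if k ∈ SW then θ k else 0 := by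
    intro k
    rw [hexa k, hexb k]
    by_cases hk : k ∈ SW
    · obtain ⟨h1, h2, h3⟩ := (hSW k).mp hk
      simp [hk, h1, h2, h3]
    · simp only [hk, if_false]
      rcases hclass k with ⟨h1, h2, h3, h4⟩ | h | ⟨h1, h2⟩
      · rw [h1, h2, h3, h4]; ring
      · exact absurd ((hSW k).mpr h) hk
      · rw [h1, h2]; ring
  have hden : (∑ k, ((dTb k - dCb k) - (dTa k - dCa k))) = (SW.card : ℝ) := by
    simp only [hd]
    rw [Finset.sum_ite_mem, Finset.univ_inter]
    simp
  have hnum : (∑ k, ((rTb k - rCb k) - (rTa k - rCa k))) = ∑ k ∈ SW, θ k := by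
    simp only [hr]
    rw [Finset.sum_ite_mem, Finset.univ_inter]
  have hc : (SW.card : ℝ) ≠ 0 := by
    exact_mod_cast (Finset.card_pos.mpr hne).ne'
  constructor
  · rw [hden]; exact hc
  · rw [hden, hnum]
end
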